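/- Let e(n) = deg B_n(t) be the degree of the n-th Stern polynomial. There does not exist a positive integer n such that e(n) = e(n+1) = e(n+2) = e(n+3). -/

import Mathlib

/-!
Since `B_{2m} = t B_m` and `B_{2m+1} = B_m + B_{m+1}`, and Stern polynomials have nonnegative
coefficients (so no cancellation of leading terms occurs), `e(2m) = e(m) + 1`,
`e(2m+2) = e(m+1) + 1` and `e(2m+1) = max(e(m), e(m+1))`. Hence the degree at an odd index is
strictly smaller than one of its two neighbours, so no four consecutive degrees (which contain
an odd index flanked by two others) can be equal.
-/

open Polynomial

/-- The Stern polynomials: `B 0 = 0`, `B 1 = 1`, `B (2n) = t * B n`,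
`B (2n+1) = B n + B (n+1)`. -/
noncomputable def stern : ℕ → Polynomial ℤ
  | 0 => 0
  | 1 => 1
  | n + 2 =>
    if _h : n % 2 = 0 then
      X * stern (n / 2 + 1)
    else
      stern (n / 2 + 1) + stern (n / 2 + 2)
  decreasing_by all_goals omega

/-- `e n` is the degree of the `n`-th Stern polynomial. -/
noncomputable def e (n : ℕ) : ℕ := (stern n).natDegree

section CoeffNonneg

variable {R : Type*} [Semiring R] [PartialOrder R] [IsOrderedAddMonoid R] {p q : R[X]}

theorem Polynomial.natDegree_le_natDegree_add_of_coeff_nonneg (hp : ∀ i, 0 ≤ p.coeff i)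
    (hq : ∀ i, 0 ≤ q.coeff i) : p.natDegree ≤ (p + q).natDegree := by
  rcases eq_or_ne p 0 with rfl | hp0
  · simp
  refine le_natDegree_of_ne_zero fun h => hp0 ?_
  rw [coeff_add, add_eq_zero_iff_of_nonneg (hp _) (hq _)] at h
  exact leadingCoeff_eq_zero.mp h.1

theorem Polynomial.natDegree_add_eq_max_of_coeff_nonneg (hp : ∀ i, 0 ≤ p.coeff i)
    (hq : ∀ i, 0 ≤ q.coeff i) : (p + q).natDegree = max p.natDegree q.natDegree :=
  le_antisymm (natDegree_add_le p q) <| max_le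
    (natDegree_le_natDegree_add_of_coeff_nonneg hp hq)
    (add_comm q p ▸ natDegree_le_natDegree_add_of_coeff_nonneg hq hp)

end CoeffNonneg

theorem stern_two_mul (m : ℕ) : stern (2 * m) = X * stern m := by
  rcases m with _ | m
  · simp [stern]
  · rw [show 2 * (m + 1) = 2 * m + 2 by ring, stern]
    simp

theorem stern_two_mul_add_one (m : ℕ) : stern (2 * m + 1) = stern m + stern (m + 1) := by
  rcases m with _ | m
  · simp [stern]
  · rw [show 2 * (m + 1) + 1 = (2 * m + 1) + 2 by ring, stern]
    simp [Nat.mul_add_div]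

theorem stern_coeff_nonneg (n i : ℕ) : 0 ≤ (stern n).coeff i := by
  induction n using stern.induct generalizing i with
  | case1 => simp [stern]
  | case2 => rw [stern, coeff_one]; split_ifs <;> simp
  | case3 n h_even ih =>
    rw [stern, dif_pos h_even]
    cases i with
    | zero => simp
    | succ i => simpa [coeff_X_mul] using ih i
  | case4 n h_odd ih₁ ih₂ =>
    rw [stern, dif_neg h_odd, coeff_add]
    exact add_nonneg (ih₁ i) (ih₂ i)

theorem stern_eval_one_pos {n : ℕ} (hn : n ≠ 0) : 0 < (stern n).eval 1 := by
  induction n using stern.induct with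
  | case1 => exact absurd rfl hn
  | case2 => simp [stern]
  | case3 n h_even ih =>
    rw [stern, dif_pos h_even, eval_mul, eval_X, one_mul]
    exact ih (by omega)
  | case4 n h_odd ih₁ ih₂ =>
    rw [stern, dif_neg h_odd, eval_add]
    exact add_pos (ih₁ (by omega)) (ih₂ (by omega))

theorem stern_ne_zero {n : ℕ} (hn : n ≠ 0) : stern n ≠ 0 := fun h => by
  simpa [h] using stern_eval_one_pos hn

theorem e_two_mul {m : ℕ} (hm : m ≠ 0) : e (2 * m) = e m + 1 := by
  rw [e, e, stern_two_mul, natDegree_X_mul (stern_ne_zero hm)]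

theorem e_two_mul_add_one (m : ℕ) : e (2 * m + 1) = max (e m) (e (m + 1)) := by
  rw [e, e, e, stern_two_mul_add_one,
    natDegree_add_eq_max_of_coeff_nonneg (stern_coeff_nonneg m) (stern_coeff_nonneg (m + 1))]

theorem e_succ_lt_max_of_even {n : ℕ} (hn : Even n) : e (n + 1) < max (e n) (e (n + 2)) := by
  obtain ⟨m, rfl⟩ := hn.exists_two_nsmul
  have h_succ : e (2 * m + 2) = e (m + 1) + 1 := e_two_mul m.succ_ne_zero
  have h_self : e m = 0 ∨ e (2 * m) = e m + 1 := by
    rcases eq_or_ne m 0 with rfl | hm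
    · simp [e, stern]
    · exact .inr (e_two_mul hm)
  rw [smul_eq_mul, e_two_mul_add_one]
  omega

theorem stern_degree_no_four_equal_general (n : ℕ) :
    ¬(e n = e (n + 1) ∧ e (n + 1) = e (n + 2) ∧ e (n + 2) = e (n + 3)) := by
  rintro ⟨h₀₁, h₁₂, h₂₃⟩
  rcases Nat.even_or_odd n with hn | hn
  · have := e_succ_lt_max_of_even hn
    omega
  · have := e_succ_lt_max_of_even hn.add_one
    simp only [add_assoc, Nat.reduceAdd] at this
    omega

theorem stern_degree_no_four_equal (n : ℕ) (hn : 1 ≤ n) :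
    ¬(e n = e (n + 1) ∧ e (n + 1) = e (n + 2) ∧ e (n + 2) = e (n + 3)) :=
  stern_degree_no_four_equal_general n
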